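/- arXiv:2510.08507 — 3 statements merged into one kernel-verified Lean document; each statement's English description precedes it below -/
import Mathlib

section
/- Let X_j, Y_j (j = 1,…,N) be finite-dimensional complex Hilbert spaces with dimensions d_{X_j}, d_{Y_j}, and X := X₁⊗⋯⊗X_N, Y := Y₁⊗⋯⊗Y_N. The linear map L^NS_{XY} on matrices over X⊗Y satisfies: (i) L^NS_{XY} ∘ L^NS_{XY} = L^NS_{XY}; (ii) L^NS_{XY} is self-adjoint with respect to the Hilbert–Schmidt inner product, i.e. tr[(L^NS_{XY}(P))† Q] = tr[P† L^NS_{XY}(Q)] for all matrices P, Q; (iii) L^NS_{XY} maps Hermitian matrices to Hermitian matrices, and a Hermitian matrix J on X⊗Y satisfies L^NS_{XY}(J) = J if and only if tr_{Y_j}[J] = (tr_{X_jY_j}[J]) ⊗ (I_{X_j}/d_{X_j}) for every j = 1,…,N. Hence L^NS_{XY} is the orthogonal projection of Hermitian matrices onto the subspace of Hermitian matrices satisfying the no-signaling constraints. -/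
/-!
Every smoothing `⌊S⌋` is an orthogonal projection for the Hilbert–Schmidt inner product: it is
idempotent, and its Kraus form `⌊S⌋P = d_S⁻¹ ∑_{s,t} (I ⊗ |t⟩⟨s|) P (I ⊗ |s⟩⟨t|)` has a set of
Kraus operators closed under `ᴴ`, which makes it self-adjoint and Hermiticity preserving.
Smoothings over different tensor factors commute and `⌊X_jY_j⌋ = ⌊X_j⌋⌊Y_j⌋`, so
`L^NS_{X_jY_j} = 1 - (1 - ⌊X_j⌋)⌊Y_j⌋` is again such a projection, and the `N` of them commute.
A product of commuting self-adjoint idempotents is a self-adjoint idempotent whose fixed points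
are the common fixed points of the factors, and `L^NS_{X_jY_j} J = J` says exactly
`⌊Y_j⌋J = ⌊X_jY_j⌋J`.
-/

open Matrix

namespace ICO

variable {N : ℕ} {κX κY : Fin N → Type}
  [∀ j, Fintype (κX j)] [∀ j, DecidableEq (κX j)]
  [∀ j, Fintype (κY j)] [∀ j, DecidableEq (κY j)]

/-- Smoothing over the factor `Y j`: `⌊Y_j⌋P := (tr_{Y_j} P) ⊗ (I_{Y_j}/d_{Y_j})`. -/
noncomputable def floorY (j : Fin N)
    (P : Matrix ((∀ i, κX i) × (∀ i, κY i)) ((∀ i, κX i) × (∀ i, κY i)) ℂ) :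
    Matrix ((∀ i, κX i) × (∀ i, κY i)) ((∀ i, κX i) × (∀ i, κY i)) ℂ :=
  Matrix.of fun p q =>
    if p.2 j = q.2 j then
      (Fintype.card (κY j) : ℂ)⁻¹ *
        ∑ c : κY j, P (p.1, Function.update p.2 j c) (q.1, Function.update q.2 j c)
    else 0

/-- Smoothing over the factors `X j ⊗ Y j`. -/
noncomputable def floorXY (j : Fin N)
    (P : Matrix ((∀ i, κX i) × (∀ i, κY i)) ((∀ i, κX i) × (∀ i, κY i)) ℂ) :
    Matrix ((∀ i, κX i) × (∀ i, κY i)) ((∀ i, κX i) × (∀ i, κY i)) ℂ :=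
  Matrix.of fun p q =>
    if p.1 j = q.1 j ∧ p.2 j = q.2 j then
      ((Fintype.card (κX j) : ℂ) * (Fintype.card (κY j) : ℂ))⁻¹ *
        ∑ a : κX j, ∑ c : κY j,
          P (Function.update p.1 j a, Function.update p.2 j c)
            (Function.update q.1 j a, Function.update q.2 j c)
    else 0

/-- `L^NS_{X_jY_j}(P) := P − ⌊Y_j⌋P + ⌊X_jY_j⌋P`. -/
noncomputable def LNSstep (j : Fin N)
    (P : Matrix ((∀ i, κX i) × (∀ i, κY i)) ((∀ i, κX i) × (∀ i, κY i)) ℂ) :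
    Matrix ((∀ i, κX i) × (∀ i, κY i)) ((∀ i, κX i) × (∀ i, κY i)) ℂ :=
  P - floorY j P + floorXY j P

/-- `L^NS_{XY} := L^NS_{X₁Y₁} ∘ ⋯ ∘ L^NS_{X_NY_N}`. -/
noncomputable def LNS
    (P : Matrix ((∀ i, κX i) × (∀ i, κY i)) ((∀ i, κX i) × (∀ i, κY i)) ℂ) :
    Matrix ((∀ i, κX i) × (∀ i, κY i)) ((∀ i, κX i) × (∀ i, κY i)) ℂ :=
  (List.finRange N).foldr (fun j Q => LNSstep j Q) P

theorem _root_.List.prod_induction_of_commute {M : Type*} [Monoid M] (p : M → Prop)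
    {l : List M} (hl : ∀ a ∈ l, ∀ b ∈ l, Commute a b)
    (hom : ∀ a b, Commute a b → p a → p b → p (a * b)) (unit : p 1) (base : ∀ x ∈ l, p x) :
    p l.prod := by
  induction l with
  | nil => exact unit
  | cons a t ih =>
    simp only [List.mem_cons, forall_eq_or_imp] at hl base
    rw [List.prod_cons]
    exact hom _ _ (Commute.list_prod_right _ _ hl.1.2) base.1
      (ih (fun x hx => (hl.2 x hx).2) base.2)

theorem _root_.IsIdempotentElem.list_prod {M : Type*} [Monoid M] {l : List M}
    (hl : ∀ a ∈ l, ∀ b ∈ l, Commute a b) (h : ∀ e ∈ l, IsIdempotentElem e) :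
    IsIdempotentElem l.prod :=
  l.prod_induction_of_commute _ hl (fun _ _ hab ha hb => ha.mul_of_commute hab hb) .one h

theorem _root_.IsIdempotentElem.mul_list_prod_of_mem {M : Type*} [Monoid M] {e : M}
    {l : List M} (he : IsIdempotentElem e) (hel : e ∈ l) (hl : ∀ f ∈ l, Commute e f) :
    e * l.prod = l.prod := by
  induction l with
  | nil => simp at hel
  | cons f t ih =>
    simp only [List.mem_cons, forall_eq_or_imp] at hel hl
    rw [List.prod_cons, ← mul_assoc]
    rcases hel with rfl | hel
    · rw [he.eq]
    · rw [hl.1.eq, mul_assoc, ih hel hl.2]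

theorem _root_.Module.End.list_prod_apply_eq_self_iff {R V : Type*} [Semiring R]
    [AddCommMonoid V] [Module R V] {l : List (Module.End R V)}
    (hl : ∀ a ∈ l, ∀ b ∈ l, Commute a b) (h : ∀ e ∈ l, IsIdempotentElem e) {v : V} :
    l.prod v = v ↔ ∀ e ∈ l, e v = v := by
  refine ⟨fun hv e he => ?_, fun hv => ?_⟩
  · rw [← hv, ← Module.End.mul_apply, (h e he).mul_list_prod_of_mem he (hl e he)]
  · induction l with
    | nil => rfl
    | cons f t ih =>
      simp only [List.mem_cons, forall_eq_or_imp] at hl h hv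
      rw [List.prod_cons, Module.End.mul_apply,
        ih (fun x hx => (hl.2 x hx).2) h.2 hv.2, hv.1]

theorem _root_.Commute.one_sub_one_sub_mul_right {R : Type*} [Ring R] {x a b : R}
    (ha : Commute x a) (hb : Commute x b) : Commute x (1 - (1 - a) * b) :=
  (Commute.one_right x).sub_right (((Commute.one_right x).sub_right ha).mul_right hb)

def IsHermitianPreserving {ι : Type*} (f : Module.End ℂ (Matrix ι ι ℂ)) : Prop :=
  ∀ P, (f P)ᴴ = f Pᴴ

namespace IsHermitianPreserving

variable {ι : Type*} {f g : Module.End ℂ (Matrix ι ι ℂ)}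

theorem one : IsHermitianPreserving (1 : Module.End ℂ (Matrix ι ι ℂ)) := fun _ => rfl

theorem sub (hf : IsHermitianPreserving f) (hg : IsHermitianPreserving g) :
    IsHermitianPreserving (f - g) := fun P => by
  simp only [LinearMap.sub_apply, conjTranspose_sub, hf P, hg P]

theorem mul (hf : IsHermitianPreserving f) (hg : IsHermitianPreserving g) :
    IsHermitianPreserving (f * g) := fun P => by
  rw [Module.End.mul_apply, hf, hg, Module.End.mul_apply]

theorem list_prod {l : List (Module.End ℂ (Matrix ι ι ℂ))}
    (h : ∀ f ∈ l, IsHermitianPreserving f) : IsHermitianPreserving l.prod :=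
  l.prod_induction _ (fun _ _ => mul) one h

theorem isHermitian_apply (hf : IsHermitianPreserving f) {P : Matrix ι ι ℂ}
    (hP : P.IsHermitian) : (f P).IsHermitian := by
  rw [IsHermitian, hf, hP.eq]

end IsHermitianPreserving

def IsHSSelfAdjoint {ι : Type*} [Fintype ι] (f : Module.End ℂ (Matrix ι ι ℂ)) : Prop :=
  ∀ P Q, ((f P)ᴴ * Q).trace = (Pᴴ * f Q).trace

namespace IsHSSelfAdjoint

variable {ι : Type*} [Fintype ι] {f g : Module.End ℂ (Matrix ι ι ℂ)}

theorem one : IsHSSelfAdjoint (1 : Module.End ℂ (Matrix ι ι ℂ)) := fun _ _ => rfl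

theorem sub (hf : IsHSSelfAdjoint f) (hg : IsHSSelfAdjoint g) : IsHSSelfAdjoint (f - g) :=
  fun P Q => by
    simp only [LinearMap.sub_apply, conjTranspose_sub, Matrix.sub_mul, Matrix.mul_sub,
      trace_sub, hf P Q, hg P Q]

theorem mul_of_commute (hfg : Commute f g) (hf : IsHSSelfAdjoint f) (hg : IsHSSelfAdjoint g) :
    IsHSSelfAdjoint (f * g) := fun P Q => by
  rw [Module.End.mul_apply, hf, hg, ← Module.End.mul_apply, hfg.eq, Module.End.mul_apply]

theorem list_prod {l : List (Module.End ℂ (Matrix ι ι ℂ))}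
    (hl : ∀ a ∈ l, ∀ b ∈ l, Commute a b) (h : ∀ f ∈ l, IsHSSelfAdjoint f) :
    IsHSSelfAdjoint l.prod :=
  l.prod_induction_of_commute _ hl (fun _ _ hab ha hb => ha.mul_of_commute hab hb) one h

end IsHSSelfAdjoint

/-- Presents `ι` as a product `ι' × σ` through the `σ`-coordinate of a point and the map
replacing it; the tensor factors `X_j`, `Y_j` of the index set of `X ⊗ Y` are `(pi j).fst` and
`(pi j).snd`. -/
structure Factor (ι σ : Type*) where
  coord : ι → σ
  update : ι → σ → ι
  coord_update (p : ι) (c : σ) : coord (update p c) = c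
  update_coord (p : ι) : update p (coord p) = p
  update_update (p : ι) (c c' : σ) : update (update p c) c' = update p c'

namespace Factor

attribute [simp] coord_update update_coord update_update

variable {ι α β σ σ₁ σ₂ : Type*}

structure Independent (ℓ₁ : Factor ι σ₁) (ℓ₂ : Factor ι σ₂) : Prop where
  coord_update_left (p : ι) (c : σ₂) : ℓ₁.coord (ℓ₂.update p c) = ℓ₁.coord p
  coord_update_right (p : ι) (a : σ₁) : ℓ₂.coord (ℓ₁.update p a) = ℓ₂.coord p
  update_comm (p : ι) (a : σ₁) (c : σ₂) :
    ℓ₁.update (ℓ₂.update p c) a = ℓ₂.update (ℓ₁.update p a) c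

theorem Independent.symm {ℓ₁ : Factor ι σ₁} {ℓ₂ : Factor ι σ₂} (h : Independent ℓ₁ ℓ₂) :
    Independent ℓ₂ ℓ₁ :=
  ⟨h.coord_update_right, h.coord_update_left, fun p c a => (h.update_comm p a c).symm⟩

def pi {κ : Type*} [DecidableEq κ] {β : κ → Type*} (j : κ) : Factor (∀ i, β i) (β j) where
  coord p := p j
  update p c := Function.update p j c
  coord_update p c := by simp
  update_coord p := by simp
  update_update p c c' := by simp

def fst (ℓ : Factor α σ) : Factor (α × β) σ where
  coord p := ℓ.coord p.1
  update p c := (ℓ.update p.1 c, p.2)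
  coord_update p c := ℓ.coord_update p.1 c
  update_coord p := by simp
  update_update p c c' := by simp

def snd (ℓ : Factor β σ) : Factor (α × β) σ where
  coord p := ℓ.coord p.2
  update p c := (p.1, ℓ.update p.2 c)
  coord_update p c := ℓ.coord_update p.2 c
  update_coord p := by simp
  update_update p c c' := by simp

theorem pi_independent_pi {κ : Type*} [DecidableEq κ] {β : κ → Type*} {i j : κ} (hij : i ≠ j) :
    Independent (pi (β := β) i) (pi j) where
  coord_update_left p c := Function.update_of_ne hij c p
  coord_update_right p a := Function.update_of_ne hij.symm a p
  update_comm p a c := (Function.update_comm hij a c p).symm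

theorem Independent.fst {ℓ₁ : Factor α σ₁} {ℓ₂ : Factor α σ₂} (h : Independent ℓ₁ ℓ₂) :
    Independent (ℓ₁.fst (β := β)) ℓ₂.fst :=
  ⟨fun p => h.coord_update_left p.1, fun p => h.coord_update_right p.1,
    fun p a c => by simp [Factor.fst, h.update_comm]⟩

theorem Independent.snd {ℓ₁ : Factor β σ₁} {ℓ₂ : Factor β σ₂} (h : Independent ℓ₁ ℓ₂) :
    Independent (ℓ₁.snd (α := α)) ℓ₂.snd :=
  ⟨fun p => h.coord_update_left p.2, fun p => h.coord_update_right p.2,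
    fun p a c => by simp [Factor.snd, h.update_comm]⟩

theorem fst_independent_snd (ℓ₁ : Factor α σ₁) (ℓ₂ : Factor β σ₂) :
    Independent ℓ₁.fst ℓ₂.snd :=
  ⟨fun _ _ => rfl, fun _ _ => rfl, fun _ _ _ => rfl⟩

section Smoothing

variable [Fintype σ] [DecidableEq σ] [Fintype σ₁] [DecidableEq σ₁] [Fintype σ₂] [DecidableEq σ₂]

/-- `⌊σ⌋P = (tr_σ P) ⊗ (I_σ / d_σ)`. -/
noncomputable def smooth (ℓ : Factor ι σ) : Module.End ℂ (Matrix ι ι ℂ) where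
  toFun P := of fun p q =>
    if ℓ.coord p = ℓ.coord q then
      (Fintype.card σ : ℂ)⁻¹ * ∑ c, P (ℓ.update p c) (ℓ.update q c)
    else 0
  map_add' P Q := by
    ext p q
    simp only [Matrix.of_apply, Matrix.add_apply]
    split_ifs <;> simp [Finset.sum_add_distrib, mul_add]
  map_smul' z P := by
    ext p q
    simp only [Matrix.of_apply, Matrix.smul_apply, smul_eq_mul, RingHom.id_apply]
    split_ifs <;> simp [Finset.mul_sum, mul_left_comm]

theorem smooth_apply (ℓ : Factor ι σ) (P : Matrix ι ι ℂ) (p q : ι) :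
    ℓ.smooth P p q =
      if ℓ.coord p = ℓ.coord q then
        (Fintype.card σ : ℂ)⁻¹ * ∑ c, P (ℓ.update p c) (ℓ.update q c)
      else 0 :=
  rfl

theorem isIdempotentElem_smooth (ℓ : Factor ι σ) : IsIdempotentElem ℓ.smooth := by
  refine LinearMap.ext fun P => Matrix.ext fun p q => ?_
  have : Nonempty σ := ⟨ℓ.coord p⟩
  simp only [Module.End.mul_apply, smooth_apply, coord_update, update_update, if_true,
    Finset.sum_const, Finset.card_univ, nsmul_eq_mul]
  split_ifs <;> field_simp

theorem smooth_mul_smooth_apply {ℓ₁ : Factor ι σ₁} {ℓ₂ : Factor ι σ₂} (h : Independent ℓ₁ ℓ₂)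
    (P : Matrix ι ι ℂ) (p q : ι) :
    (ℓ₁.smooth * ℓ₂.smooth) P p q =
      if ℓ₁.coord p = ℓ₁.coord q ∧ ℓ₂.coord p = ℓ₂.coord q then
        ((Fintype.card σ₁ : ℂ) * Fintype.card σ₂)⁻¹ *
          ∑ a, ∑ c, P (ℓ₂.update (ℓ₁.update p a) c) (ℓ₂.update (ℓ₁.update q a) c)
      else 0 := by
  simp only [Module.End.mul_apply, smooth_apply, h.coord_update_right]
  by_cases h₁ : ℓ₁.coord p = ℓ₁.coord q
  · by_cases h₂ : ℓ₂.coord p = ℓ₂.coord q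
    · simp only [h₁, h₂, and_self, if_true, Finset.mul_sum, mul_inv, mul_assoc]
    · simp [h₂]
  · simp [h₁]

theorem Independent.commute_smooth {ℓ₁ : Factor ι σ₁} {ℓ₂ : Factor ι σ₂}
    (h : Independent ℓ₁ ℓ₂) : Commute ℓ₁.smooth ℓ₂.smooth := by
  refine LinearMap.ext fun P => Matrix.ext fun p q => ?_
  rw [smooth_mul_smooth_apply h, smooth_mul_smooth_apply h.symm, Finset.sum_comm]
  simp only [h.update_comm, and_comm, mul_comm]

end Smoothing

section Transition

variable [DecidableEq ι] [DecidableEq σ]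

/-- The operator `I ⊗ |t⟩⟨s|` on `ι ≃ ι' × σ`. -/
def transition (ℓ : Factor ι σ) (s t : σ) : Matrix ι ι ℂ :=
  of fun p q => if ℓ.coord p = t ∧ q = ℓ.update p s then 1 else 0

theorem transition_conjTranspose (ℓ : Factor ι σ) (s t : σ) :
    (ℓ.transition s t)ᴴ = ℓ.transition t s := by
  ext p q
  have : ℓ.coord q = t ∧ p = ℓ.update q s ↔ ℓ.coord p = s ∧ q = ℓ.update p t := by
    constructor
    · rintro ⟨rfl, rfl⟩
      simp
    · rintro ⟨rfl, rfl⟩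
      simp
  simp only [conjTranspose_apply, transition, of_apply, this]
  split_ifs <;> simp

variable [Fintype ι]

theorem transition_mul_mul_transition_apply (ℓ : Factor ι σ) (s t : σ) (P : Matrix ι ι ℂ)
    (p q : ι) :
    (ℓ.transition s t * P * ℓ.transition t s) p q =
      if ℓ.coord p = t ∧ ℓ.coord q = t then P (ℓ.update p s) (ℓ.update q s) else 0 := by
  rw [← transition_conjTranspose ℓ s t]
  simp only [Matrix.mul_apply, conjTranspose_apply, transition, of_apply]
  by_cases hp : ℓ.coord p = t <;> by_cases hq : ℓ.coord q = t <;> simp [hp, hq]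

theorem smooth_eq_sum_transition [Fintype σ] (ℓ : Factor ι σ) (P : Matrix ι ι ℂ) :
    ℓ.smooth P =
      (Fintype.card σ : ℂ)⁻¹ • ∑ s, ∑ t, ℓ.transition s t * P * ℓ.transition t s := by
  ext p q
  simp only [smooth_apply, Matrix.smul_apply, Matrix.sum_apply,
    transition_mul_mul_transition_apply, smul_eq_mul, ite_and, Finset.sum_ite_eq,
    Finset.mem_univ, if_true, eq_comm (a := ℓ.coord q)]
  split_ifs <;> simp

end Transition

variable [Fintype ι] [Fintype σ] [DecidableEq σ]

theorem isHermitianPreserving_smooth (ℓ : Factor ι σ) : IsHermitianPreserving ℓ.smooth := by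
  classical
  intro P
  simp only [smooth_eq_sum_transition, conjTranspose_smul, conjTranspose_sum, conjTranspose_mul,
    transition_conjTranspose, Matrix.mul_assoc, star_inv₀, star_natCast]

theorem isHSSelfAdjoint_smooth (ℓ : Factor ι σ) : IsHSSelfAdjoint ℓ.smooth := by
  classical
  intro P Q
  rw [isHermitianPreserving_smooth, smooth_eq_sum_transition, smooth_eq_sum_transition,
    Finset.sum_comm (f := fun s t => ℓ.transition s t * Q * ℓ.transition t s)]
  simp only [Matrix.smul_mul, Matrix.mul_smul, Finset.sum_mul, Matrix.mul_sum, trace_smul,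
    trace_sum]
  congr 1
  refine Finset.sum_congr rfl fun s _ => Finset.sum_congr rfl fun t _ => ?_
  simp only [Matrix.mul_assoc]
  rw [trace_mul_comm]
  simp only [Matrix.mul_assoc]

end Factor

section

variable (κX κY)

noncomputable abbrev smoothX (j : Fin N) :
    Module.End ℂ (Matrix ((∀ i, κX i) × (∀ i, κY i)) ((∀ i, κX i) × (∀ i, κY i)) ℂ) :=
  (Factor.pi j).fst.smooth

noncomputable abbrev smoothY (j : Fin N) :
    Module.End ℂ (Matrix ((∀ i, κX i) × (∀ i, κY i)) ((∀ i, κX i) × (∀ i, κY i)) ℂ) :=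
  (Factor.pi j).snd.smooth

noncomputable def stepMap (j : Fin N) :
    Module.End ℂ (Matrix ((∀ i, κX i) × (∀ i, κY i)) ((∀ i, κX i) × (∀ i, κY i)) ℂ) :=
  1 - (1 - smoothX κX κY j) * smoothY κX κY j

end

theorem commute_smoothX_smoothY (i j : Fin N) : Commute (smoothX κX κY i) (smoothY κX κY j) :=
  (Factor.fst_independent_snd _ _).commute_smooth

theorem floorXY_eq_smoothX_smoothY (j : Fin N)
    (P : Matrix ((∀ i, κX i) × (∀ i, κY i)) ((∀ i, κX i) × (∀ i, κY i)) ℂ) :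
    floorXY j P = smoothX κX κY j (smoothY κX κY j P) := by
  ext p q
  rw [← Module.End.mul_apply, Factor.smooth_mul_smooth_apply (Factor.fst_independent_snd _ _)]
  rfl

theorem stepMap_apply (j : Fin N)
    (P : Matrix ((∀ i, κX i) × (∀ i, κY i)) ((∀ i, κX i) × (∀ i, κY i)) ℂ) :
    stepMap κX κY j P = LNSstep j P := by
  rw [LNSstep, floorXY_eq_smoothX_smoothY]
  exact (sub_add _ _ _).symm

theorem LNS_eq_list_prod
    (P : Matrix ((∀ i, κX i) × (∀ i, κY i)) ((∀ i, κX i) × (∀ i, κY i)) ℂ) :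
    LNS P = ((List.finRange N).map (stepMap κX κY)).prod P := by
  rw [LNS]
  induction List.finRange N with
  | nil => rfl
  | cons j l ih =>
    rw [List.foldr_cons, ih, List.map_cons, List.prod_cons, Module.End.mul_apply, stepMap_apply]

theorem commute_stepMap (i j : Fin N) : Commute (stepMap κX κY i) (stepMap κX κY j) := by
  rcases eq_or_ne i j with rfl | hij
  · exact Commute.refl _
  have hXX : Commute (smoothX κX κY i) (smoothX κX κY j) :=
    (Factor.pi_independent_pi hij).fst.commute_smooth
  have hYY : Commute (smoothY κX κY i) (smoothY κX κY j) :=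
    (Factor.pi_independent_pi hij).snd.commute_smooth
  exact (Commute.one_sub_one_sub_mul_right
    (Commute.one_sub_one_sub_mul_right hXX (commute_smoothX_smoothY i j)).symm
    (Commute.one_sub_one_sub_mul_right (commute_smoothX_smoothY j i).symm hYY).symm).symm

theorem isIdempotentElem_stepMap (j : Fin N) : IsIdempotentElem (stepMap κX κY j) := by
  have hX : IsIdempotentElem (smoothX κX κY j) := Factor.isIdempotentElem_smooth _
  have hY : IsIdempotentElem (smoothY κX κY j) := Factor.isIdempotentElem_smooth _
  exact (hX.one_sub.mul_of_commute
    ((Commute.one_left _).sub_left (commute_smoothX_smoothY j j)) hY).one_sub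

theorem isHSSelfAdjoint_stepMap (j : Fin N) : IsHSSelfAdjoint (stepMap κX κY j) := by
  have hX : IsHSSelfAdjoint (smoothX κX κY j) := Factor.isHSSelfAdjoint_smooth _
  have hY : IsHSSelfAdjoint (smoothY κX κY j) := Factor.isHSSelfAdjoint_smooth _
  exact IsHSSelfAdjoint.one.sub ((IsHSSelfAdjoint.one.sub hX).mul_of_commute
    ((Commute.one_left _).sub_left (commute_smoothX_smoothY j j)) hY)

theorem isHermitianPreserving_stepMap (j : Fin N) : IsHermitianPreserving (stepMap κX κY j) := by
  have hX : IsHermitianPreserving (smoothX κX κY j) := Factor.isHermitianPreserving_smooth _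
  have hY : IsHermitianPreserving (smoothY κX κY j) := Factor.isHermitianPreserving_smooth _
  exact IsHermitianPreserving.one.sub ((IsHermitianPreserving.one.sub hX).mul hY)

theorem stepMap_apply_eq_self_iff (j : Fin N)
    (J : Matrix ((∀ i, κX i) × (∀ i, κY i)) ((∀ i, κX i) × (∀ i, κY i)) ℂ) :
    stepMap κX κY j J = J ↔ floorY j J = floorXY j J := by
  rw [stepMap_apply, LNSstep, sub_add, sub_eq_self, sub_eq_zero]

theorem lns_orthogonal_projection_onto_no_signaling_subspace :
    (∀ P : Matrix ((∀ i, κX i) × (∀ i, κY i)) ((∀ i, κX i) × (∀ i, κY i)) ℂ,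
      LNS (LNS P) = LNS P) ∧
    (∀ P Q : Matrix ((∀ i, κX i) × (∀ i, κY i)) ((∀ i, κX i) × (∀ i, κY i)) ℂ,
      ((LNS P)ᴴ * Q).trace = (Pᴴ * LNS Q).trace) ∧
    (∀ J : Matrix ((∀ i, κX i) × (∀ i, κY i)) ((∀ i, κX i) × (∀ i, κY i)) ℂ,
      J.IsHermitian → (LNS J).IsHermitian) ∧
    (∀ J : Matrix ((∀ i, κX i) × (∀ i, κY i)) ((∀ i, κX i) × (∀ i, κY i)) ℂ,
      J.IsHermitian →
        (LNS J = J ↔ ∀ j : Fin N, floorY j J = floorXY j J)) := by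
  set steps := (List.finRange N).map (stepMap κX κY)
  have hcomm : ∀ a ∈ steps, ∀ b ∈ steps, Commute a b := by
    simp only [steps, List.mem_map, List.mem_finRange, true_and]
    rintro _ ⟨i, rfl⟩ _ ⟨j, rfl⟩
    exact commute_stepMap i j
  have hidem : ∀ e ∈ steps, IsIdempotentElem e := by
    simpa [steps] using isIdempotentElem_stepMap
  simp only [LNS_eq_list_prod]
  refine ⟨fun P => ?_, fun P Q => ?_, fun J hJ => ?_, fun J _ => ?_⟩
  · rw [← Module.End.mul_apply, (IsIdempotentElem.list_prod hcomm hidem).eq]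
  · exact IsHSSelfAdjoint.list_prod hcomm (by simpa [steps] using isHSSelfAdjoint_stepMap) P Q
  · exact (IsHermitianPreserving.list_prod
      (by simpa [steps] using isHermitianPreserving_stepMap)).isHermitian_apply hJ
  · rw [Module.End.list_prod_apply_eq_self_iff hcomm hidem]
    simp [steps, stepMap_apply_eq_self_iff]

end ICO
end

section
/- Let m ≥ 2 be an integer and α ∈ [0,1]. Let Δ^m be the channel on m×m matrices defined by Δ^m(σ) := Σ_{j=1}^m ⟨j|σ|j⟩ |j⟩⟨j|, and let M be the channel on m×m matrices whose Choi operator is J^M := (1−α)·J^{Δ^m} + (α/(m−1))·(I_{m²} − J^{Δ^m}), where J^{Δ^m} := Σ_{j=1}^m |j⟩⟨j|⊗|j⟩⟨j|. Then the diamond distance satisfies ½‖M − Δ^m‖_◇ = α, where ½‖M − Δ^m‖_◇ := sup over density matrices ρ on ℂ^m⊗ℂ^m of ½‖(id⊗M)(ρ) − (id⊗Δ^m)(ρ)‖₁. -/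
/-!
Write `c = α/(m-1)`. The Choi operator of `M - Δ^m` is `c (I - J^Δ) - α J^Δ`, a difference of two
positive semidefinite Choi operators whose channels multiply traces by `(m-1) c = α` and by `α`.
Hence for every state the output difference is `P - N` with `P, N ≥ 0` of trace `α` each, and
`‖P - N‖₁ ≤ tr P + tr N = 2α`. Conversely, on the product state `|00⟩⟨00|` the output difference
has diagonal entries `-α` once and `c` (`m-1` times); since the absolute diagonal entries of a
Hermitian matrix sum to at most its trace norm, the trace norm is at least `2α`.
-/

open Matrix
open scoped Classical ComplexOrder

namespace ICO

/-- Trace norm of a Hermitian matrix: the sum of the absolute values of its eigenvalues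
(junk value 0 on non-Hermitian matrices). -/
noncomputable def traceNorm {n : Type} [Fintype n] [DecidableEq n]
    (H : Matrix n n ℂ) : ℝ :=
  if h : H.IsHermitian then ∑ i, |h.eigenvalues i| else 0

/-- A density matrix: positive semidefinite with unit trace. -/
def IsDensity {n : Type} [Fintype n] (ρ : Matrix n n ℂ) : Prop :=
  ρ.PosSemidef ∧ ρ.trace = 1

/-- Action of the channel with Choi operator `J` (on A⊗B) on a state of R⊗A,
acting as the identity on the reference R:  `(id_R ⊗ C)(ρ)`. -/
noncomputable def applyChoi {A B R : Type} [Fintype A]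
    (J : Matrix (A × B) (A × B) ℂ) (ρ : Matrix (R × A) (R × A) ℂ) :
    Matrix (R × B) (R × B) ℂ :=
  Matrix.of fun p q => ∑ a : A, ∑ a' : A, ρ (p.1, a) (q.1, a') * J (a, p.2) (a', q.2)

/-- Choi operator of the noiseless classical channel `Δ^m`. -/
noncomputable def JDelta (m : ℕ) : Matrix (Fin m × Fin m) (Fin m × Fin m) ℂ :=
  Matrix.of fun p q => if p.1 = p.2 ∧ q.1 = q.2 ∧ p.1 = q.1 then 1 else 0

/-- Half the diamond distance between the channels with Choi operators `J₁, J₂`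
(both from an m-dimensional system A to B), with an m-dimensional reference system. -/
noncomputable def dDist {A B : Type} [Fintype A] [DecidableEq A] [Fintype B] [DecidableEq B]
    (J₁ J₂ : Matrix (A × B) (A × B) ℂ) : ℝ :=
  sSup { t : ℝ | ∃ ρ : Matrix (A × A) (A × A) ℂ, IsDensity ρ ∧
    t = (1 / 2) * traceNorm (applyChoi J₁ ρ - applyChoi J₂ ρ) }

open scoped Kronecker

/-- Identifies the input index of a Choi matrix with the system index of a state; conjugating
`ρ ⊗ₖ J` by it gives `applyChoi J ρ`, so complete positivity reduces to `PosSemidef.kronecker`. -/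
noncomputable def choiContraction (R A B : Type) : Matrix ((R × A) × (A × B)) (R × B) ℂ :=
  of fun x p => if x.1.1 = p.1 ∧ x.1.2 = x.2.1 ∧ x.2.2 = p.2 then 1 else 0

section ApplyChoi

variable {A B R : Type} [Fintype A]

theorem applyChoi_eq_conjTranspose_mul_kronecker_mul [Fintype B] [Fintype R]
    (J : Matrix (A × B) (A × B) ℂ) (ρ : Matrix (R × A) (R × A) ℂ) :
    applyChoi J ρ = (choiContraction R A B)ᴴ * (ρ ⊗ₖ J) * choiContraction R A B := by
  ext p q
  simp only [applyChoi, of_apply]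
  rw [Finset.sum_comm]
  simp [choiContraction, mul_apply, Fintype.sum_prod_type, ite_and, kroneckerMap_apply,
    apply_ite (starRingEnd ℂ)]

theorem posSemidef_applyChoi [Fintype B] [Fintype R] {J : Matrix (A × B) (A × B) ℂ}
    {ρ : Matrix (R × A) (R × A) ℂ} (hJ : J.PosSemidef) (hρ : ρ.PosSemidef) :
    (applyChoi J ρ).PosSemidef := by
  rw [applyChoi_eq_conjTranspose_mul_kronecker_mul]
  exact (hρ.kronecker hJ).conjTranspose_mul_mul_same _

theorem isHermitian_applyChoi [Fintype B] [Fintype R] {J : Matrix (A × B) (A × B) ℂ}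
    {ρ : Matrix (R × A) (R × A) ℂ} (hJ : J.IsHermitian) (hρ : ρ.IsHermitian) :
    (applyChoi J ρ).IsHermitian := by
  rw [applyChoi_eq_conjTranspose_mul_kronecker_mul]
  refine isHermitian_conjTranspose_mul_mul _ ?_
  rw [IsHermitian, conjTranspose_kronecker, hρ.eq, hJ.eq]

theorem applyChoi_sub (J₁ J₂ : Matrix (A × B) (A × B) ℂ) (ρ : Matrix (R × A) (R × A) ℂ) :
    applyChoi (J₁ - J₂) ρ = applyChoi J₁ ρ - applyChoi J₂ ρ := by
  ext p q
  simp [applyChoi, mul_sub]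

theorem applyChoi_smul {S : Type} [DistribSMul S ℂ] [SMulCommClass S ℂ ℂ] (s : S)
    (J : Matrix (A × B) (A × B) ℂ) (ρ : Matrix (R × A) (R × A) ℂ) :
    applyChoi (s • J) ρ = s • applyChoi J ρ := by
  ext p q
  simp [applyChoi, ← Finset.smul_sum, mul_smul_comm]

theorem trace_applyChoi [DecidableEq A] [Fintype B] [Fintype R] {J : Matrix (A × B) (A × B) ℂ}
    {t : ℂ} (hJ : ∀ a a', ∑ b, J (a, b) (a', b) = if a = a' then t else 0)
    (ρ : Matrix (R × A) (R × A) ℂ) :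
    (applyChoi J ρ).trace = t * ρ.trace := by
  simp only [trace, diag, applyChoi, of_apply, Fintype.sum_prod_type, Finset.mul_sum]
  refine Finset.sum_congr rfl fun r _ => ?_
  rw [Finset.sum_comm]
  refine Finset.sum_congr rfl fun a _ => ?_
  rw [Finset.sum_comm]
  simp_rw [← Finset.mul_sum, hJ, mul_ite, mul_zero, Finset.sum_ite_eq, Finset.mem_univ, if_true,
    mul_comm]

theorem applyChoi_single_apply [DecidableEq R] [DecidableEq A] (J : Matrix (A × B) (A × B) ℂ)
    (r : R) (a : A) (p q : R × B) :
    applyChoi J (single (r, a) (r, a) 1) p q =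
      if p.1 = r ∧ q.1 = r then J (a, p.2) (a, q.2) else 0 := by
  simp [applyChoi, single, ite_and, eq_comm]

end ApplyChoi

section TraceNorm

variable {n : Type} [Fintype n] [DecidableEq n]

theorem IsHermitian.star_eigenvectorUnitary_mul_mul {H : Matrix n n ℂ} (hH : H.IsHermitian) :
    star (hH.eigenvectorUnitary : Matrix n n ℂ) * H * hH.eigenvectorUnitary =
      diagonal (Complex.ofReal ∘ hH.eigenvalues) := by
  simpa [Unitary.conjStarAlgAut_star_apply] using hH.conjStarAlgAut_star_eigenvectorUnitary

theorem traceNorm_eq_sum_abs_re_diag {H : Matrix n n ℂ} (hH : H.IsHermitian) :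
    traceNorm H = ∑ i, |((star (hH.eigenvectorUnitary : Matrix n n ℂ) * H *
      hH.eigenvectorUnitary) i i).re| := by
  simp [traceNorm, hH, IsHermitian.star_eigenvectorUnitary_mul_mul]

theorem traceNorm_sub_le {P N : Matrix n n ℂ} (hP : P.PosSemidef) (hN : N.PosSemidef) :
    traceNorm (P - N) ≤ P.trace.re + N.trace.re := by
  have hH : (P - N).IsHermitian := hP.isHermitian.sub hN.isHermitian
  set U : Matrix n n ℂ := ↑hH.eigenvectorUnitary
  have htrace (A : Matrix n n ℂ) : (star U * A * U).trace = A.trace := by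
    rw [trace_mul_cycle, mem_unitaryGroup_iff.mp hH.eigenvectorUnitary.2, one_mul]
  have hdiag {A : Matrix n n ℂ} (hA : A.PosSemidef) (i : n) : 0 ≤ ((star U * A * U) i i).re := by
    rw [star_eq_conjTranspose]
    exact (Complex.nonneg_iff.mp (hA.conjTranspose_mul_mul_same U).diag_nonneg).1
  rw [traceNorm_eq_sum_abs_re_diag hH, ← htrace P, ← htrace N, trace, trace, Complex.re_sum,
    Complex.re_sum, ← Finset.sum_add_distrib]
  refine Finset.sum_le_sum fun i _ => ?_
  rw [mul_sub, sub_mul, Matrix.sub_apply, Complex.sub_re]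
  calc _ ≤ |((star U * P * U) i i).re| + |((star U * N * U) i i).re| := abs_sub _ _
    _ = _ := by rw [abs_of_nonneg (hdiag hP i), abs_of_nonneg (hdiag hN i)]; rfl

theorem sum_norm_diag_le_traceNorm {H : Matrix n n ℂ} (hH : H.IsHermitian) :
    ∑ i, ‖H i i‖ ≤ traceNorm H := by
  set U : Matrix n n ℂ := ↑hH.eigenvectorUnitary
  have hentry (i : n) : H i i = ∑ j, (hH.eigenvalues j : ℂ) * ((‖U i j‖ ^ 2 : ℝ) : ℂ) := by
    conv_lhs => rw [hH.spectral_theorem]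
    rw [Unitary.conjStarAlgAut_apply, mul_apply]
    refine Finset.sum_congr rfl fun j _ => ?_
    rw [mul_diagonal, star_apply, Function.comp_apply, mul_right_comm, Complex.star_def,
      Complex.mul_conj', mul_comm]
    push_cast
    rfl
  have hcol (j : n) : ∑ i, ‖U i j‖ ^ 2 = 1 := by
    have := congrFun (congrFun (Unitary.coe_star_mul_self hH.eigenvectorUnitary) j) j
    simp only [mul_apply, star_apply, IsHermitian.eigenvectorUnitary_apply, RCLike.star_def,
      Complex.conj_mul', one_apply_eq] at this
    exact_mod_cast this
  calc ∑ i, ‖H i i‖ ≤ ∑ i, ∑ j, |hH.eigenvalues j| * ‖U i j‖ ^ 2 := by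
        refine Finset.sum_le_sum fun i _ => ?_
        rw [hentry]
        refine (norm_sum_le _ _).trans_eq (Finset.sum_congr rfl fun j _ => ?_)
        simp
    _ = traceNorm H := by
        rw [Finset.sum_comm, traceNorm, dif_pos hH]
        simp [← Finset.mul_sum, hcol]

end TraceNorm

theorem isDensity_single {n : Type} [Fintype n] [DecidableEq n] (i : n) :
    IsDensity (single i i (1 : ℂ)) := by
  refine ⟨?_, trace_single_eq_same i 1⟩
  rw [← diagonal_single, posSemidef_diagonal_iff]
  intro j
  rw [Pi.single_apply]
  split_ifs <;> simp

theorem sum_norm_le_traceNorm_applyChoi_single {A B R : Type} [Fintype A] [Fintype B] [Fintype R]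
    [DecidableEq A] [DecidableEq B] [DecidableEq R] {J : Matrix (A × B) (A × B) ℂ}
    (hJ : J.IsHermitian) (r : R) (a : A) :
    ∑ b, ‖J (a, b) (a, b)‖ ≤ traceNorm (applyChoi J (single (r, a) (r, a) 1)) := by
  refine le_of_eq_of_le ?_ (sum_norm_diag_le_traceNorm <|
    isHermitian_applyChoi hJ (isDensity_single (r, a)).1.isHermitian)
  simp [applyChoi_single_apply, Fintype.sum_prod_type, apply_ite (‖·‖)]

section JDelta

variable {m : ℕ}

theorem JDelta_eq_diagonal : JDelta m = diagonal fun p => if p.1 = p.2 then 1 else 0 := by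
  ext ⟨a, b⟩ ⟨a', b'⟩
  simp only [JDelta, of_apply, diagonal_apply, Prod.mk.injEq]
  split_ifs <;> grind

theorem posSemidef_JDelta : (JDelta m).PosSemidef := by
  rw [JDelta_eq_diagonal, posSemidef_diagonal_iff]
  intro p
  split_ifs <;> simp

theorem posSemidef_one_sub_JDelta : (1 - JDelta m).PosSemidef := by
  rw [JDelta_eq_diagonal, ← diagonal_one, diagonal_sub, posSemidef_diagonal_iff]
  intro p
  split_ifs <;> simp

theorem sum_JDelta_apply (a a' : Fin m) :
    ∑ b, JDelta m (a, b) (a', b) = if a = a' then 1 else 0 := by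
  by_cases h : a = a' <;> simp [JDelta, h]

theorem trace_applyChoi_JDelta {R : Type} [Fintype R] (ρ : Matrix (R × Fin m) (R × Fin m) ℂ) :
    (applyChoi (JDelta m) ρ).trace = ρ.trace := by
  simpa using trace_applyChoi sum_JDelta_apply ρ

theorem trace_applyChoi_one_sub_JDelta {R : Type} [Fintype R]
    (ρ : Matrix (R × Fin m) (R × Fin m) ℂ) :
    (applyChoi (1 - JDelta m) ρ).trace = (m - 1) * ρ.trace := by
  refine trace_applyChoi (fun a a' => ?_) ρ
  simp only [Matrix.sub_apply, Finset.sum_sub_distrib, sum_JDelta_apply]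
  split_ifs <;> simp [one_apply, *]

theorem traceNorm_smul_applyChoi_one_sub_JDelta_sub_le {R : Type} [Fintype R] [DecidableEq R]
    {c α : ℝ} (hc : 0 ≤ c) (hα : 0 ≤ α) {ρ : Matrix (R × Fin m) (R × Fin m) ℂ}
    (hρ : IsDensity ρ) :
    traceNorm (c • applyChoi (1 - JDelta m) ρ - α • applyChoi (JDelta m) ρ) ≤
      c * (m - 1) + α := by
  refine (traceNorm_sub_le ((posSemidef_applyChoi posSemidef_one_sub_JDelta hρ.1).smul hc)
    ((posSemidef_applyChoi posSemidef_JDelta hρ.1).smul hα)).trans_eq ?_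
  simp [trace_smul, trace_applyChoi_JDelta, trace_applyChoi_one_sub_JDelta, hρ.2]

theorem applyChoi_noisy_sub_applyChoi_JDelta (α c : ℝ) {R : Type}
    (ρ : Matrix (R × Fin m) (R × Fin m) ℂ) :
    applyChoi ((1 - α) • JDelta m + c • (1 - JDelta m)) ρ - applyChoi (JDelta m) ρ =
      applyChoi (c • (1 - JDelta m) - α • JDelta m) ρ := by
  rw [← applyChoi_sub]
  congr 1
  module

theorem sum_norm_smul_one_sub_JDelta_sub_smul_JDelta_apply (c α : ℝ) (a : Fin m) :
    ∑ b, ‖(c • (1 - JDelta m) - α • JDelta m) (a, b) (a, b)‖ = |α| + (m - 1) * |c| := by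
  have hentry (b : Fin m) : ‖(c • (1 - JDelta m) - α • JDelta m) (a, b) (a, b)‖ =
      if a = b then |α| else |c| := by
    by_cases h : a = b <;> simp [JDelta, h]
  rw [Finset.sum_congr rfl fun b _ => hentry b]
  simp [Finset.sum_ite, Finset.filter_eq, Finset.filter_ne, Nat.cast_sub a.pos]

end JDelta

theorem dDist_noisy_delta_general (m : ℕ) (hm : 2 ≤ m) (α : ℝ) (hα₀ : 0 ≤ α) :
    dDist ((1 - α) • JDelta m + (α / ((m : ℝ) - 1)) •
        ((1 : Matrix (Fin m × Fin m) (Fin m × Fin m) ℂ) - JDelta m))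
      (JDelta m) = α := by
  have : NeZero m := ⟨by omega⟩
  have hm₁ : (0 : ℝ) < m - 1 := sub_pos.mpr (by exact_mod_cast hm)
  set c := α / ((m : ℝ) - 1)
  have hc₀ : 0 ≤ c := div_nonneg hα₀ hm₁.le
  have hc : ((m : ℝ) - 1) * c = α := mul_div_cancel₀ α hm₁.ne'
  have hupper (ρ : Matrix (Fin m × Fin m) (Fin m × Fin m) ℂ) (hρ : IsDensity ρ) :
      traceNorm (applyChoi (c • (1 - JDelta m) - α • JDelta m) ρ) ≤ 2 * α := by
    rw [applyChoi_sub, applyChoi_smul, applyChoi_smul]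
    linarith [traceNorm_smul_applyChoi_one_sub_JDelta_sub_le hc₀ hα₀ hρ]
  set ρ₀ : Matrix (Fin m × Fin m) (Fin m × Fin m) ℂ := single (0, 0) (0, 0) 1
  have hρ₀ : IsDensity ρ₀ := isDensity_single _
  have hJ : (c • (1 - JDelta m) - α • JDelta m).IsHermitian :=
    (posSemidef_one_sub_JDelta.smul hc₀).isHermitian.sub (posSemidef_JDelta.smul hα₀).isHermitian
  have hlower : 2 * α ≤ traceNorm (applyChoi (c • (1 - JDelta m) - α • JDelta m) ρ₀) := by
    refine le_of_eq_of_le ?_ (sum_norm_le_traceNorm_applyChoi_single hJ 0 0)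
    rw [sum_norm_smul_one_sub_JDelta_sub_smul_JDelta_apply, abs_of_nonneg hα₀, abs_of_nonneg hc₀,
      hc]
    ring
  simp only [dDist, applyChoi_noisy_sub_applyChoi_JDelta]
  refine IsGreatest.csSup_eq ⟨⟨ρ₀, hρ₀, by linarith [hupper ρ₀ hρ₀]⟩, ?_⟩
  rintro _ ⟨ρ, hρ, rfl⟩
  linarith [hupper ρ hρ]

theorem dDist_noisy_delta (m : ℕ) (hm : 2 ≤ m) (α : ℝ) (hα₀ : 0 ≤ α) (hα₁ : α ≤ 1) :
    dDist ((1 - α) • JDelta m + (α / ((m : ℝ) - 1)) •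
        ((1 : Matrix (Fin m × Fin m) (Fin m × Fin m) ℂ) - JDelta m))
      (JDelta m) = α :=
  dDist_noisy_delta_general m hm α hα₀

end ICO
end

section
/- Let X := X₁⊗X₂ and Y := Y₁⊗Y₂ be finite-dimensional systems, and let J be a positive semidefinite matrix on X⊗Y. Suppose a real number m and Hermitian matrices E, F, G, H on X⊗Y satisfy: tr[(E+G)·J] ≥ m; tr_X E + tr_X G = I_Y; 0 ⪯ E ⪯ F; 0 ⪯ G ⪯ H; tr[F+H] = m·d_Y; F = ⌊Y₂⌋F; tr_{X₂Y₂}F = ⌊Y₁⌋(tr_{X₂Y₂}F); H = ⌊Y₁⌋H; tr_{X₁Y₁}H = ⌊Y₂⌋(tr_{X₁Y₁}H). Suppose a real number λ, Hermitian matrices M, N on X⊗Y and a Hermitian matrix K on Y satisfy: M ⪰ 0, tr_{Y₂}M = ⌊X₂⌋(tr_{Y₂}M), tr_{X₂Y}M = d_{X₂}·λ·I_{X₁}, and M + I_X⊗K ⪰ (λ+1)·J; N ⪰ 0, tr_{Y₁}N = ⌊X₁⌋(tr_{Y₁}N), tr_{X₁Y}N = d_{X₁}·λ·I_{X₂}, and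 N + I_X⊗K ⪰ (λ+1)·J. Then m ≤ tr[K]. -/
/-!
STATEMENT 12: Weak duality between the primal and dual SDPs for the one-shot zero-error
classical capacity assisted by free causally definite supermaps with two slots:
any primal feasible (m, E, F, G, H) and dual feasible (λ, M, N, K) satisfy m ≤ tr K.
-/

open Matrix
open scoped ComplexOrder

set_option linter.unusedVariables false
set_option linter.unusedSectionVars false
namespace ICO

variable {X₁ X₂ Y₁ Y₂ : Type}
  [Fintype X₁] [DecidableEq X₁] [Fintype X₂] [DecidableEq X₂]
  [Fintype Y₁] [DecidableEq Y₁] [Fintype Y₂] [DecidableEq Y₂]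

/-- `W` = X⊗Y with X = X₁⊗X₂ and Y = Y₁⊗Y₂. -/
abbrev W (X₁ X₂ Y₁ Y₂ : Type) : Type := (X₁ × X₂) × (Y₁ × Y₂)

/-- `⌊Y₂⌋` on matrices over X⊗Y. -/
noncomputable def floorY₂w (P : Matrix (W X₁ X₂ Y₁ Y₂) (W X₁ X₂ Y₁ Y₂) ℂ) :
    Matrix (W X₁ X₂ Y₁ Y₂) (W X₁ X₂ Y₁ Y₂) ℂ :=
  Matrix.of fun p q =>
    if p.2.2 = q.2.2 then
      (Fintype.card Y₂ : ℂ)⁻¹ * ∑ c : Y₂, P (p.1, (p.2.1, c)) (q.1, (q.2.1, c))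
    else 0

/-- `⌊Y₁⌋` on matrices over X⊗Y. -/
noncomputable def floorY₁w (P : Matrix (W X₁ X₂ Y₁ Y₂) (W X₁ X₂ Y₁ Y₂) ℂ) :
    Matrix (W X₁ X₂ Y₁ Y₂) (W X₁ X₂ Y₁ Y₂) ℂ :=
  Matrix.of fun p q =>
    if p.2.1 = q.2.1 then
      (Fintype.card Y₁ : ℂ)⁻¹ * ∑ c : Y₁, P (p.1, (c, p.2.2)) (q.1, (c, q.2.2))
    else 0

/-- Partial trace over X₂⊗Y₂. -/
noncomputable def trX₂Y₂ (P : Matrix (W X₁ X₂ Y₁ Y₂) (W X₁ X₂ Y₁ Y₂) ℂ) :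
    Matrix (X₁ × Y₁) (X₁ × Y₁) ℂ :=
  Matrix.of fun u v => ∑ a : X₂, ∑ c : Y₂, P ((u.1, a), (u.2, c)) ((v.1, a), (v.2, c))

/-- Partial trace over X₁⊗Y₁. -/
noncomputable def trX₁Y₁ (P : Matrix (W X₁ X₂ Y₁ Y₂) (W X₁ X₂ Y₁ Y₂) ℂ) :
    Matrix (X₂ × Y₂) (X₂ × Y₂) ℂ :=
  Matrix.of fun u v => ∑ a : X₁, ∑ c : Y₁, P ((a, u.1), (c, u.2)) ((a, v.1), (c, v.2))

/-- `⌊Y⌋` on matrices over a pair X'⊗Y' (single-pair smoothing). -/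
noncomputable def floorSnd {X' Y' : Type} [Fintype Y'] [DecidableEq Y']
    (M : Matrix (X' × Y') (X' × Y') ℂ) : Matrix (X' × Y') (X' × Y') ℂ :=
  Matrix.of fun u v =>
    if u.2 = v.2 then (Fintype.card Y' : ℂ)⁻¹ * ∑ c : Y', M (u.1, c) (v.1, c) else 0

/-- Partial trace over Y₂ of a matrix on X⊗Y. -/
noncomputable def trY₂ (P : Matrix (W X₁ X₂ Y₁ Y₂) (W X₁ X₂ Y₁ Y₂) ℂ) :
    Matrix ((X₁ × X₂) × Y₁) ((X₁ × X₂) × Y₁) ℂ :=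
  Matrix.of fun u v => ∑ c : Y₂, P (u.1, (u.2, c)) (v.1, (v.2, c))

/-- Partial trace over Y₁ of a matrix on X⊗Y. -/
noncomputable def trY₁ (P : Matrix (W X₁ X₂ Y₁ Y₂) (W X₁ X₂ Y₁ Y₂) ℂ) :
    Matrix ((X₁ × X₂) × Y₂) ((X₁ × X₂) × Y₂) ℂ :=
  Matrix.of fun u v => ∑ c : Y₁, P (u.1, (c, u.2)) (v.1, (c, v.2))

/-- `⌊X₂⌋` on matrices over (X₁⊗X₂)⊗Y₁. -/
noncomputable def floorX₂ {Yr : Type}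
    (M : Matrix ((X₁ × X₂) × Yr) ((X₁ × X₂) × Yr) ℂ) :
    Matrix ((X₁ × X₂) × Yr) ((X₁ × X₂) × Yr) ℂ :=
  Matrix.of fun u v =>
    if u.1.2 = v.1.2 then
      (Fintype.card X₂ : ℂ)⁻¹ * ∑ a : X₂, M ((u.1.1, a), u.2) ((v.1.1, a), v.2)
    else 0

/-- `⌊X₁⌋` on matrices over (X₁⊗X₂)⊗Y₂. -/
noncomputable def floorX₁ {Yr : Type}
    (M : Matrix ((X₁ × X₂) × Yr) ((X₁ × X₂) × Yr) ℂ) :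
    Matrix ((X₁ × X₂) × Yr) ((X₁ × X₂) × Yr) ℂ :=
  Matrix.of fun u v =>
    if u.1.1 = v.1.1 then
      (Fintype.card X₁ : ℂ)⁻¹ * ∑ a : X₁, M ((a, u.1.2), u.2) ((a, v.1.2), v.2)
    else 0

/-- Partial trace over X₂⊗Y of a matrix on X⊗Y. -/
noncomputable def trX₂Y (P : Matrix (W X₁ X₂ Y₁ Y₂) (W X₁ X₂ Y₁ Y₂) ℂ) :
    Matrix X₁ X₁ ℂ :=
  Matrix.of fun a a' => ∑ x₂ : X₂, ∑ y : Y₁ × Y₂, P ((a, x₂), y) ((a', x₂), y)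

/-- Partial trace over X₁⊗Y of a matrix on X⊗Y. -/
noncomputable def trX₁Y (P : Matrix (W X₁ X₂ Y₁ Y₂) (W X₁ X₂ Y₁ Y₂) ℂ) :
    Matrix X₂ X₂ ℂ :=
  Matrix.of fun a a' => ∑ x₁ : X₁, ∑ y : Y₁ × Y₂, P ((x₁, a), y) ((x₁, a'), y)

/-- `I_X ⊗ K` on X⊗Y for K a matrix on Y. -/
noncomputable def idXKron (K : Matrix (Y₁ × Y₂) (Y₁ × Y₂) ℂ) :
    Matrix (W X₁ X₂ Y₁ Y₂) (W X₁ X₂ Y₁ Y₂) ℂ :=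
  Matrix.of fun p q => if p.1 = q.1 then K p.2 q.2 else 0

/-! helpers -/

noncomputable def ptr {α β : Type} [Fintype β] (A : Matrix (α×β) (α×β) ℂ) : Matrix α α ℂ :=
  Matrix.of fun a a' => ∑ c : β, A (a,c) (a',c)

noncomputable def gfloor {α β : Type} [Fintype β] [DecidableEq β] (A : Matrix (α×β) (α×β) ℂ) :
    Matrix (α×β) (α×β) ℂ :=
  Matrix.of fun u v => if u.2 = v.2 then (Fintype.card β : ℂ)⁻¹ * ∑ c : β, A (u.1,c) (v.1,c) else 0

lemma gfloor_trace_mul {α β : Type} [Fintype α] [Fintype β] [DecidableEq β]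
    (A B : Matrix (α×β) (α×β) ℂ) :
    (gfloor A * B).trace = (Fintype.card β : ℂ)⁻¹ * (ptr A * ptr B).trace := by
  simp only [Matrix.trace, Matrix.diag, Matrix.mul_apply, gfloor, ptr, Matrix.of_apply,
    Fintype.sum_prod_type, ite_mul, zero_mul, Finset.sum_ite_eq, Finset.mem_univ, if_true]
  simp only [Finset.mul_sum, Finset.sum_mul]
  refine Finset.sum_congr rfl fun a _ => ?_
  rw [Finset.sum_comm]
  refine Finset.sum_congr rfl fun a' _ => ?_
  exact Finset.sum_congr rfl fun e _ => Finset.sum_congr rfl fun c _ => by ring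

lemma psd_diag_nonneg {n : Type} [Fintype n] [DecidableEq n] {A : Matrix n n ℂ}
    (hA : A.PosSemidef) (i : n) : 0 ≤ A i i := by
  exact hA.diag_nonneg

lemma psd_trace_nonneg {n : Type} [Fintype n] [DecidableEq n] {A : Matrix n n ℂ}
    (hA : A.PosSemidef) : 0 ≤ A.trace :=
  Finset.sum_nonneg fun i _ => psd_diag_nonneg hA i

lemma psd_trace_mul_nonneg {n : Type} [Fintype n] [DecidableEq n] {A B : Matrix n n ℂ}
    (hA : A.PosSemidef) (hB : B.PosSemidef) : 0 ≤ (A * B).trace := by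
  obtain ⟨C, rfl⟩ : ∃ C : Matrix n n ℂ, A = Cᴴ * C := by
    open scoped MatrixOrder in
    obtain ⟨C, hC⟩ := CStarAlgebra.nonneg_iff_eq_star_mul_self.mp hA.nonneg
    exact ⟨C, by rw [hC, Matrix.star_eq_conjTranspose]⟩
  rw [Matrix.mul_assoc, Matrix.trace_mul_comm]
  exact psd_trace_nonneg (hB.mul_mul_conjTranspose_same C)

lemma trace_submatrix_equiv {m n : Type} [Fintype m] [Fintype n] (e : m ≃ n)
    (A : Matrix n n ℂ) : (A.submatrix e e).trace = A.trace := by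
  simp only [Matrix.trace, Matrix.diag, Matrix.submatrix_apply]
  exact e.sum_comp fun i => A i i

def eY₂ : (((X₁ × X₂) × Y₁) × Y₂) ≃ W X₁ X₂ Y₁ Y₂ where
  toFun u := (u.1.1, (u.1.2, u.2))
  invFun p := ((p.1, p.2.1), p.2.2)
  left_inv _ := rfl
  right_inv _ := rfl

def eY₁ : (((X₁ × X₂) × Y₂) × Y₁) ≃ W X₁ X₂ Y₁ Y₂ where
  toFun u := (u.1.1, (u.2, u.1.2))
  invFun p := ((p.1, p.2.2), p.2.1)
  left_inv _ := rfl
  right_inv _ := rfl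

def eX₂ {Yr : Type} : (((X₁ × Yr) × X₂)) ≃ ((X₁ × X₂) × Yr) where
  toFun u := ((u.1.1, u.2), u.1.2)
  invFun p := ((p.1.1, p.2), p.1.2)
  left_inv _ := rfl
  right_inv _ := rfl

def eX₁ {Yr : Type} : (((X₂ × Yr) × X₁)) ≃ ((X₁ × X₂) × Yr) where
  toFun u := ((u.2, u.1.1), u.1.2)
  invFun p := ((p.1.2, p.2), p.1.1)
  left_inv _ := rfl
  right_inv _ := rfl

-- rfl checks
example (F : Matrix (W X₁ X₂ Y₁ Y₂) (W X₁ X₂ Y₁ Y₂) ℂ) :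
    (floorY₂w F).submatrix eY₂ eY₂ = gfloor (F.submatrix eY₂ eY₂) := rfl
example (F : Matrix (W X₁ X₂ Y₁ Y₂) (W X₁ X₂ Y₁ Y₂) ℂ) :
    ptr (F.submatrix eY₂ eY₂) = trY₂ F := rfl
example (H : Matrix (W X₁ X₂ Y₁ Y₂) (W X₁ X₂ Y₁ Y₂) ℂ) :
    (floorY₁w H).submatrix eY₁ eY₁ = gfloor (H.submatrix eY₁ eY₁) := rfl
example (H : Matrix (W X₁ X₂ Y₁ Y₂) (W X₁ X₂ Y₁ Y₂) ℂ) :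
    ptr (H.submatrix eY₁ eY₁) = trY₁ H := rfl
example (B : Matrix ((X₁ × X₂) × Y₁) ((X₁ × X₂) × Y₁) ℂ) :
    (floorX₂ B).submatrix eX₂ eX₂ = gfloor (B.submatrix eX₂ eX₂) := rfl
example (M : Matrix (W X₁ X₂ Y₁ Y₂) (W X₁ X₂ Y₁ Y₂) ℂ) :
    ptr ((trY₂ M).submatrix eX₂ eX₂) = trX₂Y₂ M := rfl
example (B : Matrix ((X₁ × X₂) × Y₂) ((X₁ × X₂) × Y₂) ℂ) :
    (floorX₁ B).submatrix eX₁ eX₁ = gfloor (B.submatrix eX₁ eX₁) := rfl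
example (N : Matrix (W X₁ X₂ Y₁ Y₂) (W X₁ X₂ Y₁ Y₂) ℂ) :
    ptr ((trY₁ N).submatrix eX₁ eX₁) = trX₁Y₁ N := rfl
example (B : Matrix (X₁ × Y₁) (X₁ × Y₁) ℂ) : floorSnd B = gfloor B := rfl

lemma ptr_trX₂Y₂ (P : Matrix (W X₁ X₂ Y₁ Y₂) (W X₁ X₂ Y₁ Y₂) ℂ) :
    ptr (trX₂Y₂ P) = trX₂Y P := by
  ext a a'
  simp only [ptr, trX₂Y₂, trX₂Y, Matrix.of_apply, Fintype.sum_prod_type]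
  exact Finset.sum_comm

lemma ptr_trX₁Y₁ (P : Matrix (W X₁ X₂ Y₁ Y₂) (W X₁ X₂ Y₁ Y₂) ℂ) :
    ptr (trX₁Y₁ P) = trX₁Y P := by
  ext a a'
  simp only [ptr, trX₁Y₁, trX₁Y, Matrix.of_apply, Fintype.sum_prod_type]
  rw [Finset.sum_comm]
  refine Finset.sum_congr rfl fun x₁ _ => ?_
  exact Finset.sum_comm

lemma trace_trX₂Y (P : Matrix (W X₁ X₂ Y₁ Y₂) (W X₁ X₂ Y₁ Y₂) ℂ) :
    (trX₂Y P).trace = P.trace := by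
  simp [Matrix.trace, Matrix.diag, trX₂Y, Fintype.sum_prod_type]

lemma trace_trX₁Y (P : Matrix (W X₁ X₂ Y₁ Y₂) (W X₁ X₂ Y₁ Y₂) ℂ) :
    (trX₁Y P).trace = P.trace := by
  simp only [Matrix.trace, Matrix.diag, trX₁Y, Matrix.of_apply, Fintype.sum_prod_type]
  exact Finset.sum_comm

lemma trace_mul_idXKron (P : Matrix (W X₁ X₂ Y₁ Y₂) (W X₁ X₂ Y₁ Y₂) ℂ)
    (K : Matrix (Y₁ × Y₂) (Y₁ × Y₂) ℂ) :
    (P * idXKron K).trace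
      = ((Matrix.of fun (y y' : Y₁ × Y₂) => ∑ x : X₁ × X₂, P (x, y) (x, y')) * K).trace := by
  simp only [Matrix.trace, Matrix.diag, Matrix.mul_apply, Matrix.of_apply]
  have h : ∀ p : W X₁ X₂ Y₁ Y₂,
      (∑ q : W X₁ X₂ Y₁ Y₂, P p q * idXKron K q p)
        = ∑ y' : Y₁ × Y₂, P p (p.1, y') * K y' p.2 := by
    intro p
    obtain ⟨⟨a, b⟩, y⟩ := p
    simp only [idXKron, Matrix.of_apply, mul_ite, mul_zero, Fintype.sum_prod_type,
      Prod.mk.injEq, ite_and]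
    rw [Finset.sum_comm]
    simp [Finset.sum_ite_eq']
  simp only [h, Finset.sum_mul]
  conv_lhs => rw [Fintype.sum_prod_type]
  conv_lhs => rw [Finset.sum_comm]
  exact Finset.sum_congr rfl fun y _ => Finset.sum_comm


lemma trace_FM (F M : Matrix (W X₁ X₂ Y₁ Y₂) (W X₁ X₂ Y₁ Y₂) ℂ)
    (hFY₂ : F = floorY₂w F) (hFY₁ : trX₂Y₂ F = floorSnd (trX₂Y₂ F))
    (hMX₂ : trY₂ M = floorX₂ (trY₂ M)) :
    (F * M).trace = (Fintype.card Y₂ : ℂ)⁻¹ * ((Fintype.card X₂ : ℂ)⁻¹ *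
      ((Fintype.card Y₁ : ℂ)⁻¹ * (trX₂Y F * trX₂Y M).trace)) := by
  have s1 : (F * M).trace = (Fintype.card Y₂ : ℂ)⁻¹ * (trY₂ F * trY₂ M).trace := by
    conv_lhs => rw [hFY₂]
    rw [← trace_submatrix_equiv eY₂ (floorY₂w F * M),
      ← Matrix.submatrix_mul_equiv (floorY₂w F) M _ eY₂ _,
      show (floorY₂w F).submatrix eY₂ eY₂ = gfloor (F.submatrix eY₂ eY₂) from rfl,
      gfloor_trace_mul]
    rfl
  have s2 : (trY₂ F * trY₂ M).trace
      = (Fintype.card X₂ : ℂ)⁻¹ * (trX₂Y₂ M * trX₂Y₂ F).trace := by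
    rw [Matrix.trace_mul_comm]
    conv_lhs => rw [hMX₂]
    rw [← trace_submatrix_equiv eX₂ (floorX₂ (trY₂ M) * trY₂ F),
      ← Matrix.submatrix_mul_equiv (floorX₂ (trY₂ M)) (trY₂ F) _ eX₂ _,
      show (floorX₂ (trY₂ M)).submatrix eX₂ eX₂ = gfloor ((trY₂ M).submatrix eX₂ eX₂) from rfl,
      gfloor_trace_mul]
    rfl
  have s3 : (trX₂Y₂ M * trX₂Y₂ F).trace
      = (Fintype.card Y₁ : ℂ)⁻¹ * (trX₂Y F * trX₂Y M).trace := by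
    rw [Matrix.trace_mul_comm]
    conv_lhs => rw [hFY₁]
    rw [show floorSnd (trX₂Y₂ F) = gfloor (trX₂Y₂ F) from rfl, gfloor_trace_mul,
      ptr_trX₂Y₂, ptr_trX₂Y₂]
  rw [s1, s2, s3]

lemma trace_HN (H N : Matrix (W X₁ X₂ Y₁ Y₂) (W X₁ X₂ Y₁ Y₂) ℂ)
    (hHY₁ : H = floorY₁w H) (hHY₂ : trX₁Y₁ H = floorSnd (trX₁Y₁ H))
    (hNX₁ : trY₁ N = floorX₁ (trY₁ N)) :
    (H * N).trace = (Fintype.card Y₁ : ℂ)⁻¹ * ((Fintype.card X₁ : ℂ)⁻¹ *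
      ((Fintype.card Y₂ : ℂ)⁻¹ * (trX₁Y H * trX₁Y N).trace)) := by
  have s1 : (H * N).trace = (Fintype.card Y₁ : ℂ)⁻¹ * (trY₁ H * trY₁ N).trace := by
    conv_lhs => rw [hHY₁]
    rw [← trace_submatrix_equiv eY₁ (floorY₁w H * N),
      ← Matrix.submatrix_mul_equiv (floorY₁w H) N _ eY₁ _,
      show (floorY₁w H).submatrix eY₁ eY₁ = gfloor (H.submatrix eY₁ eY₁) from rfl,
      gfloor_trace_mul]
    rfl
  have s2 : (trY₁ H * trY₁ N).trace
      = (Fintype.card X₁ : ℂ)⁻¹ * (trX₁Y₁ N * trX₁Y₁ H).trace := by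
    rw [Matrix.trace_mul_comm]
    conv_lhs => rw [hNX₁]
    rw [← trace_submatrix_equiv eX₁ (floorX₁ (trY₁ N) * trY₁ H),
      ← Matrix.submatrix_mul_equiv (floorX₁ (trY₁ N)) (trY₁ H) _ eX₁ _,
      show (floorX₁ (trY₁ N)).submatrix eX₁ eX₁ = gfloor ((trY₁ N).submatrix eX₁ eX₁) from rfl,
      gfloor_trace_mul]
    rfl
  have s3 : (trX₁Y₁ N * trX₁Y₁ H).trace
      = (Fintype.card Y₂ : ℂ)⁻¹ * (trX₁Y H * trX₁Y N).trace := by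
    rw [Matrix.trace_mul_comm]
    conv_lhs => rw [hHY₂]
    rw [show floorSnd (trX₁Y₁ H) = gfloor (trX₁Y₁ H) from rfl, gfloor_trace_mul,
      ptr_trX₁Y₁, ptr_trX₁Y₁]
  rw [s1, s2, s3]



theorem zero_error_capacity_def_weak_duality
    (J E F G H M N : Matrix (W X₁ X₂ Y₁ Y₂) (W X₁ X₂ Y₁ Y₂) ℂ)
    (K : Matrix (Y₁ × Y₂) (Y₁ × Y₂) ℂ) (m lam : ℝ)
    (hJpsd : J.PosSemidef)
    (hE : E.IsHermitian) (hF : F.IsHermitian) (hG : G.IsHermitian) (hH : H.IsHermitian)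
    (hM : M.IsHermitian) (hN : N.IsHermitian) (hK : K.IsHermitian)
    -- primal feasibility
    (hEGJ : m ≤ (((E + G) * J).trace).re)
    (hEGY : (Matrix.of fun (y y' : Y₁ × Y₂) =>
        ∑ x : X₁ × X₂, (E (x, y) (x, y') + G (x, y) (x, y'))) = 1)
    (hEpos : E.PosSemidef) (hEF : (F - E).PosSemidef)
    (hGpos : G.PosSemidef) (hGH : (H - G).PosSemidef)
    (hFH : F.trace + H.trace = (m : ℂ) * (Fintype.card (Y₁ × Y₂) : ℂ))
    (hFY₂ : F = floorY₂w F)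
    (hFY₁ : trX₂Y₂ F = floorSnd (trX₂Y₂ F))
    (hHY₁ : H = floorY₁w H)
    (hHY₂ : trX₁Y₁ H = floorSnd (trX₁Y₁ H))
    -- dual feasibility
    (hMpos : M.PosSemidef)
    (hMX₂ : trY₂ M = floorX₂ (trY₂ M))
    (hMX₁marg : trX₂Y M = ((Fintype.card X₂ : ℂ) * (lam : ℂ)) • (1 : Matrix X₁ X₁ ℂ))
    (hMJ : (M + idXKron K - (((lam : ℂ) + 1) • J)).PosSemidef)
    (hNpos : N.PosSemidef)
    (hNX₁ : trY₁ N = floorX₁ (trY₁ N))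
    (hNX₂marg : trX₁Y N = ((Fintype.card X₁ : ℂ) * (lam : ℂ)) • (1 : Matrix X₂ X₂ ℂ))
    (hNJ : (N + idXKron K - (((lam : ℂ) + 1) • J)).PosSemidef) :
    m ≤ (K.trace).re := by
  by_cases hW : Nonempty (W X₁ X₂ Y₁ Y₂)
  case neg =>
    rw [not_nonempty_iff] at hW
    have hm : m ≤ 0 := by
      have h0 : ((E + G) * J).trace = 0 := by
        simp [Matrix.trace]
      rw [h0] at hEGJ
      simpa using hEGJ
    by_cases hY : Nonempty (Y₁ × Y₂)
    · exfalso
      have hX : IsEmpty (X₁ × X₂) := by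
        by_contra h
        rw [not_isEmpty_iff] at h
        exact hW.elim ⟨h.some, hY.some⟩
      obtain ⟨y⟩ := hY
      have h0 := Matrix.ext_iff.mpr hEGY y y
      simp [Matrix.one_apply_eq] at h0
    · rw [not_nonempty_iff] at hY
      have h0 : K.trace = 0 := by simp [Matrix.trace]
      rw [h0]
      simpa using hm
  case pos =>
    obtain ⟨w⟩ := hW
    haveI : Nonempty X₁ := ⟨w.1.1⟩
    haveI : Nonempty X₂ := ⟨w.1.2⟩
    haveI : Nonempty Y₁ := ⟨w.2.1⟩
    haveI : Nonempty Y₂ := ⟨w.2.2⟩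
    have cX₁ : (0:ℝ) < Fintype.card X₁ := by exact_mod_cast Fintype.card_pos
    have cX₂ : (0:ℝ) < Fintype.card X₂ := by exact_mod_cast Fintype.card_pos
    have cY₁ : (0:ℝ) < Fintype.card Y₁ := by exact_mod_cast Fintype.card_pos
    have cY₂ : (0:ℝ) < Fintype.card Y₂ := by exact_mod_cast Fintype.card_pos
    have nX₁ : (Fintype.card X₁ : ℂ) ≠ 0 := Nat.cast_ne_zero.mpr Fintype.card_ne_zero
    have nX₂ : (Fintype.card X₂ : ℂ) ≠ 0 := Nat.cast_ne_zero.mpr Fintype.card_ne_zero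
    have nY₁ : (Fintype.card Y₁ : ℂ) ≠ 0 := Nat.cast_ne_zero.mpr Fintype.card_ne_zero
    have nY₂ : (Fintype.card Y₂ : ℂ) ≠ 0 := Nat.cast_ne_zero.mpr Fintype.card_ne_zero
    -- lam ≥ 0
    have hlam : 0 ≤ lam := by
      obtain ⟨a⟩ := (inferInstance : Nonempty X₁)
      have h := Matrix.ext_iff.mpr hMX₁marg a a
      have hL : 0 ≤ trX₂Y M a a := by
        refine Finset.sum_nonneg fun x₂ _ => Finset.sum_nonneg fun y _ => ?_
        exact psd_diag_nonneg hMpos _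
      rw [h] at hL
      simp only [Matrix.smul_apply, Matrix.one_apply_eq, smul_eq_mul, mul_one] at hL
      have hre := (Complex.le_def.mp hL).1
      simp only [Complex.zero_re, Complex.mul_re, Complex.natCast_re, Complex.ofReal_re,
        Complex.natCast_im, Complex.ofReal_im, mul_zero, zero_mul, sub_zero] at hre
      nlinarith
    -- dual slack inequalities
    have h1 : (lam + 1) * ((E * J).trace).re
        ≤ ((E * M).trace).re + ((E * idXKron K).trace).re := by
      have h0 := psd_trace_mul_nonneg hEpos hMJ
      rw [mul_sub, mul_add, Matrix.mul_smul, Matrix.trace_sub, Matrix.trace_add,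
        Matrix.trace_smul] at h0
      have hre := (Complex.le_def.mp h0).1
      simp only [Complex.zero_re, Complex.sub_re, Complex.add_re, smul_eq_mul,
        Complex.mul_re, Complex.add_im, Complex.ofReal_im, Complex.one_im, Complex.add_re,
        Complex.ofReal_re, Complex.one_re, add_zero, zero_mul, sub_zero] at hre
      linarith
    have h2 : (lam + 1) * ((G * J).trace).re
        ≤ ((G * N).trace).re + ((G * idXKron K).trace).re := by
      have h0 := psd_trace_mul_nonneg hGpos hNJ
      rw [mul_sub, mul_add, Matrix.mul_smul, Matrix.trace_sub, Matrix.trace_add,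
        Matrix.trace_smul] at h0
      have hre := (Complex.le_def.mp h0).1
      simp only [Complex.zero_re, Complex.sub_re, Complex.add_re, smul_eq_mul,
        Complex.mul_re, Complex.add_im, Complex.ofReal_im, Complex.one_im, Complex.add_re,
        Complex.ofReal_re, Complex.one_re, add_zero, zero_mul, sub_zero] at hre
      linarith
    -- monotonicity E ≤ F, G ≤ H
    have h3 : ((E * M).trace).re ≤ ((F * M).trace).re := by
      have h0 := psd_trace_mul_nonneg hEF hMpos
      rw [Matrix.sub_mul, Matrix.trace_sub] at h0
      have hre := (Complex.le_def.mp h0).1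
      simp only [Complex.zero_re, Complex.sub_re] at hre
      linarith
    have h4 : ((G * N).trace).re ≤ ((H * N).trace).re := by
      have h0 := psd_trace_mul_nonneg hGH hNpos
      rw [Matrix.sub_mul, Matrix.trace_sub] at h0
      have hre := (Complex.le_def.mp h0).1
      simp only [Complex.zero_re, Complex.sub_re] at hre
      linarith
    -- trace identities
    have hFMtr : (F * M).trace = (Fintype.card Y₂ : ℂ)⁻¹ * ((Fintype.card X₂ : ℂ)⁻¹ *
        ((Fintype.card Y₁ : ℂ)⁻¹ * (((Fintype.card X₂ : ℂ) * (lam : ℂ)) * F.trace))) := by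
      rw [trace_FM F M hFY₂ hFY₁ hMX₂, hMX₁marg, Matrix.mul_smul, Matrix.mul_one,
        Matrix.trace_smul, smul_eq_mul, trace_trX₂Y]
    have hHNtr : (H * N).trace = (Fintype.card Y₁ : ℂ)⁻¹ * ((Fintype.card X₁ : ℂ)⁻¹ *
        ((Fintype.card Y₂ : ℂ)⁻¹ * (((Fintype.card X₁ : ℂ) * (lam : ℂ)) * H.trace))) := by
      rw [trace_HN H N hHY₁ hHY₂ hNX₁, hNX₂marg, Matrix.mul_smul, Matrix.mul_one,
        Matrix.trace_smul, smul_eq_mul, trace_trX₁Y]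
    have hsum : (F * M).trace + (H * N).trace = (lam : ℂ) * (m : ℂ) := by
      rw [hFMtr, hHNtr]
      have hcard : (Fintype.card (Y₁ × Y₂) : ℂ)
          = (Fintype.card Y₁ : ℂ) * (Fintype.card Y₂ : ℂ) := by
        rw [Fintype.card_prod]; push_cast; ring
      have hF' : F.trace = (m : ℂ) * ((Fintype.card Y₁ : ℂ) * (Fintype.card Y₂ : ℂ))
          - H.trace := by
        rw [← hcard]; linear_combination hFH
      rw [hF']
      field_simp
      ring
    have hsum_re : ((F * M).trace).re + ((H * N).trace).re = lam * m := by
      have h := congrArg Complex.re hsum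
      rw [Complex.add_re] at h
      rw [h, ← Complex.ofReal_mul, Complex.ofReal_re]
    -- K trace identity
    have hKtr : ((E * idXKron K).trace).re + ((G * idXKron K).trace).re = (K.trace).re := by
      have h : (E * idXKron K).trace + (G * idXKron K).trace = K.trace := by
        rw [trace_mul_idXKron, trace_mul_idXKron, ← Matrix.trace_add, ← Matrix.add_mul]
        have heq : ((Matrix.of fun (y y' : Y₁ × Y₂) => ∑ x : X₁ × X₂, E (x, y) (x, y'))
            + (Matrix.of fun (y y' : Y₁ × Y₂) => ∑ x : X₁ × X₂, G (x, y) (x, y')))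
            = (Matrix.of fun (y y' : Y₁ × Y₂) =>
                ∑ x : X₁ × X₂, (E (x, y) (x, y') + G (x, y) (x, y'))) := by
          ext y y'
          simp [Finset.sum_add_distrib]
        rw [heq, hEGY, Matrix.one_mul]
      have := congrArg Complex.re h
      rwa [Complex.add_re] at this
    -- EGJ split
    have hEGJ' : m ≤ ((E * J).trace).re + ((G * J).trace).re := by
      rwa [Matrix.add_mul, Matrix.trace_add, Complex.add_re] at hEGJ
    have hmono := mul_le_mul_of_nonneg_left hEGJ' (by linarith : (0:ℝ) ≤ lam + 1)
    nlinarith [h1, h2, h3, h4, hsum_re, hKtr, hmono]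

end ICO
end
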